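/- Generalization of Entry 1.4.9: Let q and t be complex numbers with |q| < 1, |q^t| < 1 and |q^{t}| defined by the principal power, such that all denominators below are nonzero. Then ∑_{j=0}^∞ q^{j(j+1)/2} / [(q;q)_j · (q;q)_{tj}] = [(−q;q)_∞ / (q;q)_∞] · ∑_{k=0}^∞ (−1)^k q^{k(k+1)/2} / [(q;q)_k · (−q;q)_{tk}]. -/

import Mathlib

/-!
Euler's expansion `(z;q)_∞ = ∑ₖ (-1)ᵏ q^(k choose 2) zᵏ / (q;q)ₖ` holds because the series
`G(z)` on the right satisfies `G(z) = (1 - z) G(qz)`; iterating gives `G(z) = (z;q)ₙ G(qⁿz)`,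
and `G(qⁿz) → G(0) = 1`. Expanding `(q Rʲ;q)_∞` on the left and `(-q Rᵏ;q)_∞` on the right,
with `R = q^t`, turns both sides into `(q;q)_∞⁻¹` times the double series
`∑ⱼ ∑ₖ q^(j(j+1)/2) (-1)ᵏ q^(k(k+1)/2) R^(jk) / ((q;q)ⱼ (q;q)ₖ)`, summed in the two orders;
it converges absolutely since `‖R‖ < 1`.
-/

open Complex

/-- Finite q-Pochhammer symbol `(A;Q)_k = ∏_{r=0}^{k-1} (1 - A Q^r)`. -/
noncomputable def qp (A Q : ℂ) (k : ℕ) : ℂ := ∏ r ∈ Finset.range k, (1 - A * Q ^ r)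

/-- Infinite q-Pochhammer symbol `(A;Q)_∞ = ∏_{r=0}^{∞} (1 - A Q^r)`. -/
noncomputable def qpInf (A Q : ℂ) : ℂ := ∏' r : ℕ, (1 - A * Q ^ r)

/-- q-Pochhammer symbol with (possibly non-integer) index:
`(A;Q)_{c k} := (A;Q)_∞ / (A R^k;Q)_∞` where `R = Q^c`. -/
noncomputable def qpc (A Q R : ℂ) (k : ℕ) : ℂ := qpInf A Q / qpInf (A * R ^ k) Q

/-- q-Pochhammer symbol with shifted (possibly non-integer) index:
`(A;Q)_{c k + 1} := (A;Q)_∞ / (A Q R^k;Q)_∞` where `R = Q^c`. -/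
noncomputable def qpc1 (A Q R : ℂ) (k : ℕ) : ℂ := qpInf A Q / qpInf (A * Q * R ^ k) Q

open Filter Topology

section Pochhammer

variable {q : ℂ}

lemma summable_norm_mul_pow (A : ℂ) (hq : ‖q‖ < 1) : Summable fun r : ℕ => ‖A * q ^ r‖ := by
  simpa [norm_mul, norm_pow] using (summable_geometric_of_lt_one (norm_nonneg q) hq).mul_left ‖A‖

lemma hasProd_qpInf (A : ℂ) (hq : ‖q‖ < 1) : HasProd (fun r => 1 - A * q ^ r) (qpInf A q) := by
  have := (multipliable_one_add_of_summable (f := fun r => -(A * q ^ r))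
    (by simpa using summable_norm_mul_pow A hq)).hasProd
  simpa [qpInf, ← sub_eq_add_neg] using this

lemma qp_succ (A Q : ℂ) (k : ℕ) : qp A Q (k + 1) = qp A Q k * (1 - A * Q ^ k) :=
  Finset.prod_range_succ _ _

lemma tendsto_qp_atTop (A : ℂ) (hq : ‖q‖ < 1) : Tendsto (qp A q) atTop (𝓝 (qpInf A q)) :=
  (hasProd_qpInf A hq).tendsto_prod_nat

lemma one_sub_mul_pow_ne_zero {A : ℂ} (hA : ‖A‖ < 1) (hq : ‖q‖ ≤ 1) (r : ℕ) :
    1 - A * q ^ r ≠ 0 := by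
  have : ‖A * q ^ r‖ < 1 := by
    rw [norm_mul, norm_pow]
    exact (mul_le_of_le_one_right (norm_nonneg _) (pow_le_one₀ (norm_nonneg _) hq)).trans_lt hA
  rw [sub_ne_zero]
  rintro h
  rw [← h, norm_one] at this
  exact lt_irrefl _ this

lemma qpInf_ne_zero {A : ℂ} (hA : ‖A‖ < 1) (hq : ‖q‖ < 1) : qpInf A q ≠ 0 := by
  have := tprod_one_add_ne_zero_of_summable (f := fun r : ℕ => -(A * q ^ r))
    (fun r => by simpa [← sub_eq_add_neg] using one_sub_mul_pow_ne_zero hA hq.le r)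
    (by simpa using summable_norm_mul_pow A hq)
  simpa [qpInf, ← sub_eq_add_neg] using this

end Pochhammer

lemma Nat.choose_two_succ (k : ℕ) : (k + 1).choose 2 = k.choose 2 + k := by
  rw [Nat.choose_succ_succ', Nat.choose_one_right, add_comm]

lemma Nat.mul_succ_div_two (k : ℕ) : k * (k + 1) / 2 = k.choose 2 + k := by
  rw [← Nat.choose_two_succ, Nat.choose_two_right, Nat.add_sub_cancel, mul_comm]

noncomputable def eulerCoeff (q : ℂ) (k : ℕ) : ℂ := (-1) ^ k * q ^ k.choose 2 / qp q q k

noncomputable def eulerSeries (q z : ℂ) : ℂ := ∑' k, eulerCoeff q k * z ^ k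

@[simp] lemma eulerCoeff_zero (q : ℂ) : eulerCoeff q 0 = 1 := by simp [eulerCoeff, qp]

lemma eulerCoeff_succ (q : ℂ) (k : ℕ) :
    eulerCoeff q (k + 1) = -q ^ k * eulerCoeff q k / (1 - q ^ (k + 1)) := by
  rw [eulerCoeff, eulerCoeff, qp_succ, div_mul_eq_div_div, Nat.choose_two_succ, pow_succ' q k]
  ring

lemma eulerCoeff_mul_pow_self (q : ℂ) (k : ℕ) :
    eulerCoeff q k * q ^ k = (-1) ^ k * q ^ (k * (k + 1) / 2) / qp q q k := by
  rw [eulerCoeff, Nat.mul_succ_div_two]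
  ring

lemma eulerCoeff_mul_neg_pow_self (q : ℂ) (k : ℕ) :
    eulerCoeff q k * (-q) ^ k = q ^ (k * (k + 1) / 2) / qp q q k := by
  have hsign : (-1 : ℂ) ^ k * (-1) ^ k = 1 := by rw [← mul_pow]; norm_num
  rw [eulerCoeff, Nat.mul_succ_div_two, neg_pow, pow_add]
  linear_combination q ^ k.choose 2 * q ^ k / qp q q k * hsign

section Euler

variable {q : ℂ}

lemma summable_norm_eulerCoeff_mul_pow (hq : ‖q‖ < 1) (z : ℂ) :
    Summable fun k => ‖eulerCoeff q k * z ^ k‖ := by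
  refine summable_of_ratio_norm_eventually_le (r := 1 / 2) (by norm_num) ?_
  have hsmall : ∀ᶠ k : ℕ in atTop, ‖q‖ ^ k * ‖z‖ ≤ (1 - ‖q‖) / 2 := by
    have := (tendsto_pow_atTop_nhds_zero_of_lt_one (norm_nonneg q) hq).mul_const ‖z‖
    rw [zero_mul] at this
    exact this.eventually_le_const (by linarith)
  filter_upwards [hsmall] with k hk
  have hgap : 1 - ‖q‖ ≤ ‖1 - q ^ (k + 1)‖ := by
    calc 1 - ‖q‖ ≤ 1 - ‖q‖ ^ (k + 1) := by
          gcongr; exact pow_le_of_le_one (norm_nonneg q) hq.le k.succ_ne_zero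
      _ ≤ ‖1 - q ^ (k + 1)‖ := by simpa [norm_pow] using norm_sub_norm_le (1 : ℂ) (q ^ (k + 1))
  have hpos : 0 < 1 - ‖q‖ := by linarith
  rw [eulerCoeff_succ, pow_succ z]
  simp only [norm_norm, norm_mul, norm_div, norm_neg, norm_pow]
  calc ‖q‖ ^ k * ‖eulerCoeff q k‖ / ‖1 - q ^ (k + 1)‖ * (‖z‖ ^ k * ‖z‖)
      = ‖q‖ ^ k * ‖z‖ / ‖1 - q ^ (k + 1)‖ * (‖eulerCoeff q k‖ * ‖z‖ ^ k) := by ring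
    _ ≤ (1 - ‖q‖) / 2 / (1 - ‖q‖) * (‖eulerCoeff q k‖ * ‖z‖ ^ k) := by gcongr
    _ = 1 / 2 * (‖eulerCoeff q k‖ * ‖z‖ ^ k) := by field_simp

lemma eulerSeries_eq_one_sub_mul (hq : ‖q‖ < 1) (z : ℂ) :
    eulerSeries q z = (1 - z) * eulerSeries q (q * z) := by
  have hs := (summable_norm_eulerCoeff_mul_pow hq z).of_norm
  have ht := (summable_norm_eulerCoeff_mul_pow hq (q * z)).of_norm
  have hstep : ∀ k : ℕ, eulerCoeff q (k + 1) * z ^ (k + 1) =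
      eulerCoeff q (k + 1) * (q * z) ^ (k + 1) - z * (eulerCoeff q k * (q * z) ^ k) := fun k => by
    have hk : 1 - q ^ (k + 1) ≠ 0 := by
      simpa [← pow_succ'] using one_sub_mul_pow_ne_zero hq hq.le k
    rw [eulerCoeff_succ]
    field_simp
    ring
  have hshift := ht.tsum_eq_zero_add
  rw [eulerSeries, hs.tsum_eq_zero_add]
  simp_rw [hstep]
  rw [((summable_nat_add_iff 1).2 ht).tsum_sub (ht.mul_left z), tsum_mul_left]
  simp only [eulerCoeff_zero, pow_zero, mul_one, eulerSeries] at hshift ⊢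
  linear_combination -hshift

lemma eulerSeries_eq_qp_mul (hq : ‖q‖ < 1) (z : ℂ) (n : ℕ) :
    eulerSeries q z = qp z q n * eulerSeries q (q ^ n * z) := by
  induction n with
  | zero => simp [qp]
  | succ n ih =>
    rw [ih, eulerSeries_eq_one_sub_mul hq, qp_succ, pow_succ', mul_assoc q]
    ring

lemma tendsto_eulerSeries_pow_mul (hq : ‖q‖ < 1) (z : ℂ) :
    Tendsto (fun n : ℕ => eulerSeries q (q ^ n * z)) atTop (𝓝 1) := by
  have hzero : ∑' k, eulerCoeff q k * (0 : ℂ) ^ k = 1 := by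
    rw [tsum_eq_single 0 fun k hk => by simp [hk]]
    simp
  have hshrink : Tendsto (fun n : ℕ => q ^ n * z) atTop (𝓝 0) := by
    simpa using (tendsto_pow_atTop_nhds_zero_of_norm_lt_one hq).mul_const z
  rw [← hzero]
  refine tendsto_tsum_of_dominated_convergence (summable_norm_eulerCoeff_mul_pow hq z)
    (fun k => (hshrink.pow k).const_mul _) (Eventually.of_forall fun n k => ?_)
  rw [mul_pow, norm_mul, norm_mul, norm_mul, norm_pow (q ^ n)]
  gcongr
  exact mul_le_of_le_one_left (norm_nonneg _) (pow_le_one₀ (norm_nonneg _)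
    (by rw [norm_pow]; exact pow_le_one₀ (norm_nonneg _) hq.le))

theorem eulerSeries_eq_qpInf (hq : ‖q‖ < 1) (z : ℂ) : eulerSeries q z = qpInf z q := by
  have h := (tendsto_qp_atTop z hq).mul (tendsto_eulerSeries_pow_mul hq z)
  rw [mul_one] at h
  exact tendsto_nhds_unique (tendsto_const_nhds.congr (eulerSeries_eq_qp_mul hq z)) h

end Euler

lemma tsum_mul_tsum_mul_comm {ι κ 𝕜 : Type*} [NormedField 𝕜] [CompleteSpace 𝕜]
    {a : ι → 𝕜} {b : κ → 𝕜} {K : ι → κ → 𝕜} (ha : Summable fun i => ‖a i‖)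
    (hb : Summable fun k => ‖b k‖) (hK : ∀ i k, ‖K i k‖ ≤ 1) :
    ∑' i, a i * ∑' k, b k * K i k = ∑' k, b k * ∑' i, a i * K i k := by
  have hsum : Summable fun p : ι × κ => a p.1 * b p.2 * K p.1 p.2 := by
    refine (ha.mul_of_nonneg hb (fun _ => norm_nonneg _) fun _ => norm_nonneg _).of_norm_bounded
      fun p => ?_
    rw [norm_mul, norm_mul]
    exact mul_le_of_le_one_right (by positivity) (hK p.1 p.2)
  simp_rw [← tsum_mul_left]
  calc ∑' i, ∑' k, a i * (b k * K i k) = ∑' i, ∑' k, a i * b k * K i k := by simp_rw [mul_assoc]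
    _ = ∑' k, ∑' i, a i * b k * K i k := (hsum.tsum_comm (f := fun i k => a i * b k * K i k)).symm
    _ = ∑' k, ∑' i, b k * (a i * K i k) := tsum_congr fun k => tsum_congr fun i => by ring

lemma qpInf_mul_pow_eq_tsum {q : ℂ} (hq : ‖q‖ < 1) (A R : ℂ) (n : ℕ) :
    qpInf (A * R ^ n) q = ∑' k, eulerCoeff q k * A ^ k * R ^ (k * n) := by
  rw [← eulerSeries_eq_qpInf hq, eulerSeries]
  simp_rw [mul_pow, ← pow_mul, mul_comm n, mul_assoc]

theorem entry_1_4_9_general_general (q t : ℂ)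
    (hq : ‖q‖ < 1) (hqt : ‖q ^ t‖ < 1) :
    ∑' j : ℕ, q ^ (j * (j + 1) / 2) / (qp q q j * qpc q q (q ^ t) j)
    = (qpInf (-q) q / qpInf q q) *
      ∑' k : ℕ, (-1 : ℂ) ^ k * q ^ (k * (k + 1) / 2) /
        (qp q q k * qpc (-q) q (q ^ t) k) := by
  set R := q ^ t
  have hPm : qpInf (-q) q ≠ 0 := qpInf_ne_zero (by rwa [norm_neg]) hq
  have hlhs : ∀ j : ℕ, q ^ (j * (j + 1) / 2) / (qp q q j * qpc q q R j) = (qpInf q q)⁻¹ *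
      (eulerCoeff q j * (-q) ^ j * ∑' k, eulerCoeff q k * q ^ k * R ^ (k * j)) := fun j => by
    rw [eulerCoeff_mul_neg_pow_self, ← qpInf_mul_pow_eq_tsum hq, qpc]
    simp only [div_eq_mul_inv, mul_inv, inv_inv]
    ring
  have hrhs : ∀ k : ℕ, qpInf (-q) q / qpInf q q * ((-1) ^ k * q ^ (k * (k + 1) / 2) /
      (qp q q k * qpc (-q) q R k)) = (qpInf q q)⁻¹ *
      (eulerCoeff q k * q ^ k * ∑' j, eulerCoeff q j * (-q) ^ j * R ^ (k * j)) := fun k => by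
    simp_rw [eulerCoeff_mul_pow_self, mul_comm k, ← qpInf_mul_pow_eq_tsum hq, qpc]
    field_simp
  have hK : ∀ j k : ℕ, ‖R ^ (k * j)‖ ≤ 1 := fun j k => by
    rw [norm_pow]; exact pow_le_one₀ (norm_nonneg _) hqt.le
  rw [← tsum_mul_left]
  simp_rw [hlhs, hrhs, tsum_mul_left]
  rw [tsum_mul_tsum_mul_comm (summable_norm_eulerCoeff_mul_pow hq (-q))
    (summable_norm_eulerCoeff_mul_pow hq q) hK]

/-- generalization of Entry 1.4.9. -/
theorem entry_1_4_9_general (q t : ℂ)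
    (hq : ‖q‖ < 1) (hqt : ‖q ^ t‖ < 1)
    (h1 : ∀ j : ℕ, qp q q j ≠ 0)
    (h2 : ∀ j : ℕ, qpc q q (q ^ t) j ≠ 0)
    (h3 : ∀ j : ℕ, qpInf (q * (q ^ t) ^ j) q ≠ 0)
    (h4 : qpInf q q ≠ 0)
    (h5 : ∀ k : ℕ, qpc (-q) q (q ^ t) k ≠ 0)
    (h6 : ∀ k : ℕ, qpInf (-q * (q ^ t) ^ k) q ≠ 0) :
    ∑' j : ℕ, q ^ (j * (j + 1) / 2) / (qp q q j * qpc q q (q ^ t) j)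
    = (qpInf (-q) q / qpInf q q) *
      ∑' k : ℕ, (-1 : ℂ) ^ k * q ^ (k * (k + 1) / 2) /
        (qp q q k * qpc (-q) q (q ^ t) k) :=
  entry_1_4_9_general_general q t hq hqt
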